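/- arXiv:math/0109114 — 2 statements merged into one kernel-verified Lean document; each statement's English description precedes it below -/
import Mathlib

section
/- For distinct odd primes p < q, the smallest common element of the arithmetic progressions {p² + 2(r-1)p : r ≥ 1} and {q² + 2(s-1)q : s ≥ 1} equals p·q·(3 + 2·⌈Z⌉·H(Z)) where Z = (q/p - 3)/2 and H is the Heaviside step function (H(z) = 1 for z > 0, H(0) = 1/2, H(z) = 0 for z < 0). -/
noncomputable def heaviside (z : ℝ) : ℝ := if z > 0 then 1 else if z = 0 then 1 / 2 else 0

theorem two_ap_least_common (p q : ℕ) (hp : p.Prime) (hq : q.Prime)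
    (hpo : Odd p) (hqo : Odd q) (hpq : p < q) :
    ∃ t : ℕ, IsLeast ({x : ℕ | ∃ r ≥ 1, x = p ^ 2 + 2 * (r - 1) * p} ∩
        {x : ℕ | ∃ s ≥ 1, x = q ^ 2 + 2 * (s - 1) * q}) t ∧
      (t : ℝ) = p * q * (3 + 2 * (⌈((q : ℝ) / p - 3) / 2⌉ : ℝ) *
        heaviside (((q : ℝ) / p - 3) / 2)) := by
  have hp0 : 0 < p := hp.pos
  have hq0 : 0 < q := hq.pos
  have hpm : p % 2 = 1 := Nat.odd_iff.mp hpo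
  have hqm : q % 2 = 1 := Nat.odd_iff.mp hqo
  have hndvd : ¬ p ∣ q := by
    intro h
    exact absurd ((Nat.prime_dvd_prime_iff_eq hp hq).mp h) hpq.ne
  set d : ℕ := (q - p) / (2 * p) with hd
  set m : ℕ := (q - p) % (2 * p) with hm
  have hdm : 2 * p * d + m = q - p := Nat.div_add_mod _ _
  have hmlt : m < 2 * p := Nat.mod_lt _ (by omega)
  obtain ⟨D, hD⟩ : ∃ D, D = p * d := ⟨_, rfl⟩
  have hdm' : 2 * D + m = q - p := by rw [hD, ← mul_assoc]; exact hdm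
  have hqeq : q = 2 * D + m + p := by omega
  have hm0 : m ≠ 0 := by
    intro h
    exact hndvd ⟨2 * d + 1, by rw [hqeq, h, hD]; ring⟩
  have hkodd : (2 * d + 3) % 2 = 1 := by omega
  refine ⟨p * q * (2 * d + 3), ⟨⟨?_, ?_⟩, ?_⟩, ?_⟩
  · -- membership in first AP
    have he_odd : (q * (2 * d + 3)) % 2 = 1 := by
      have : Odd (q * (2 * d + 3)) := hqo.mul ⟨d + 1, by ring⟩
      exact Nat.odd_iff.mp this
    have he_ge : p ≤ q * (2 * d + 3) :=
      le_trans hpq.le (Nat.le_mul_of_pos_right q (by omega))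
    refine ⟨(q * (2 * d + 3) - p) / 2 + 1, le_add_self, ?_⟩
    have hr : (q * (2 * d + 3) - p) / 2 + 1 - 1 = (q * (2 * d + 3) - p) / 2 := by omega
    have h2 : 2 * ((q * (2 * d + 3) - p) / 2) = q * (2 * d + 3) - p := by omega
    rw [hr, h2]
    zify [he_ge]
    ring
  · -- membership in second AP
    have he_odd : (p * (2 * d + 3)) % 2 = 1 := by
      have : Odd (p * (2 * d + 3)) := hpo.mul ⟨d + 1, by ring⟩
      exact Nat.odd_iff.mp this
    have hpe : p * (2 * d + 3) = 2 * D + 3 * p := by rw [hD]; ring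
    have he_ge : q ≤ p * (2 * d + 3) := by omega
    refine ⟨(p * (2 * d + 3) - q) / 2 + 1, le_add_self, ?_⟩
    have hr : (p * (2 * d + 3) - q) / 2 + 1 - 1 = (p * (2 * d + 3) - q) / 2 := by omega
    have h2 : 2 * ((p * (2 * d + 3) - q) / 2) = p * (2 * d + 3) - q := by omega
    rw [hr, h2]
    zify [he_ge]
    ring
  · -- lower bound
    rintro x ⟨⟨r, hr1, hxr⟩, ⟨s, hs1, hxs⟩⟩
    have hpx : p ∣ x := ⟨p + 2 * (r - 1), by rw [hxr]; ring⟩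
    have hqx : q ∣ x := ⟨q + 2 * (s - 1), by rw [hxs]; ring⟩
    have hcop : Nat.Coprime p q := (Nat.coprime_primes hp hq).mpr hpq.ne
    obtain ⟨c, hc⟩ := hcop.mul_dvd_of_dvd_of_dvd hpx hqx
    have h1 : q * c = p + 2 * (r - 1) :=
      Nat.eq_of_mul_eq_mul_left hp0
        (by rw [← mul_assoc, ← hc, hxr]; ring)
    have h2 : p * c = q + 2 * (s - 1) :=
      Nat.eq_of_mul_eq_mul_left hq0
        (by rw [show q * (p * c) = p * q * c by ring, ← hc, hxs]; ring)
    have hcodd : Odd c := by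
      have hodd : Odd (q * c) := by
        rw [h1]; exact hpo.add_even (even_two_mul _)
      exact (Nat.odd_mul.mp hodd).2
    have hge : q ≤ p * c := h2 ▸ Nat.le_add_right _ _
    have hne : p * c ≠ q := fun h => hndvd ⟨c, h.symm⟩
    have hgt : q < p * c := lt_of_le_of_ne hge (Ne.symm hne)
    obtain ⟨u, hu⟩ := hcodd
    have hck : 2 * d + 3 ≤ c := by
      by_contra hlt
      push_neg at hlt
      have hc' : c ≤ 2 * d + 1 := by omega
      have h4 : q < 2 * D + p := by
        calc q < p * c := hgt
          _ ≤ p * (2 * d + 1) := Nat.mul_le_mul_left p hc'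
          _ = 2 * D + p := by rw [hD]; ring
      omega
    rw [hc]
    exact Nat.mul_le_mul_left _ hck
  · -- the closed form
    have hpR : (0 : ℝ) < p := by exact_mod_cast hp0
    rcases lt_trichotomy q (3 * p) with h3 | h3 | h3
    · -- q < 3p, heaviside is 0
      have hd0 : d = 0 := by
        by_contra h
        have hDp : p ≤ D := by
          rw [hD]
          calc p = p * 1 := (mul_one p).symm
            _ ≤ p * d := Nat.mul_le_mul_left p (by omega)
        omega
      have hZ : (((q : ℝ) / p - 3) / 2) < 0 := by
        have : (q : ℝ) / p < 3 := by
          rw [div_lt_iff₀ hpR]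
          exact_mod_cast (by omega : (q:ℤ) < 3 * p)
        linarith
      have hH : heaviside (((q : ℝ) / p - 3) / 2) = 0 := by
        simp [heaviside, not_lt.mpr hZ.le, hZ.ne]
      rw [hH, hd0]
      push_cast
      ring
    · exact absurd ⟨3, by omega⟩ hndvd
    · -- q > 3p, heaviside is 1
      have hd1 : 1 ≤ d := by
        by_contra h
        have : D = 0 := by rw [hD, show d = 0 by omega, mul_zero]
        omega
      have hZ : (0 : ℝ) < (((q : ℝ) / p - 3) / 2) := by
        have : (3 : ℝ) < (q : ℝ) / p := by
          rw [lt_div_iff₀ hpR]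
          exact_mod_cast (by omega : (3 * p : ℤ) < q)
        linarith
      have hH : heaviside (((q : ℝ) / p - 3) / 2) = 1 := by
        simp [heaviside, hZ]
      have key1 : p * (2 * d + 1) < q := by
        have : p * (2 * d + 1) = 2 * D + p := by rw [hD]; ring
        omega
      have key2 : q ≤ p * (2 * d + 3) := by
        have : p * (2 * d + 3) = 2 * D + 3 * p := by rw [hD]; ring
        omega
      have hceil : ⌈((q : ℝ) / p - 3) / 2⌉ = (d : ℤ) := by
        rw [Int.ceil_eq_iff]
        constructor
        · have hq1 : 2 * (d : ℝ) + 1 < (q : ℝ) / p := by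
            rw [lt_div_iff₀ hpR]
            have key1R : (p:ℝ) * (2*(d:ℝ)+1) < q := by exact_mod_cast key1
            linarith [key1R]
          push_cast
          linarith
        · have hq2 : (q : ℝ) / p ≤ 2 * (d : ℝ) + 3 := by
            rw [div_le_iff₀ hpR]
            have key2R : (q:ℝ) ≤ (p:ℝ) * (2*(d:ℝ)+3) := by exact_mod_cast key2
            linarith [key2R]
          push_cast
          linarith
      rw [hH, hceil]
      push_cast
      ring
end

section
/- For pairwise distinct odd primes p₁ < ... < p_k (k ≥ 2), the smallest common element of the arithmetic progressions {p_i² + 2(r-1)p_i : r ≥ 1} equals (∏ᵢ p_i)·(1 + 2·⌈Q⌉·H(Q)) where Q = (p_k²/∏ᵢ p_i - 1)/2 and H is the Heaviside step function. -/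
lemma aux_prod_dvd (k : ℕ) (p : Fin k → ℕ) (hp : ∀ i, (p i).Prime)
    (hinj : Function.Injective p) (x : ℕ) (hd : ∀ i, p i ∣ x) : (∏ i, p i) ∣ x := by
  have he : ∏ i, p i = ∏ q ∈ Finset.univ.image p, q := by
    rw [Finset.prod_image (fun a _ b _ h => hinj h)]
  rw [he]
  exact Finset.prod_primes_dvd x (by simp; intro i; exact (hp i).prime)
    (by simp; intro i; exact hd i)

lemma aux_ceil (c P j : ℕ) (hP : 0 < P) (h1 : (c:ℝ) ≤ 2*P*j + P) (h2 : 2*(P:ℝ)*j < c + P) :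
    (⌈(((c:ℝ)/P) - 1)/2⌉ : ℝ) = j := by
  have hPr : (0:ℝ) < P := by exact_mod_cast hP
  have : ⌈(((c:ℝ)/P) - 1)/2⌉ = (j:ℤ) := by
    rw [Int.ceil_eq_iff]
    constructor
    · push_cast
      rw [lt_div_iff₀ (by norm_num : (0:ℝ) < 2), lt_sub_iff_add_lt, lt_div_iff₀ hPr]
      nlinarith
    · push_cast
      rw [div_le_iff₀ (by norm_num : (0:ℝ) < 2), sub_le_iff_le_add, div_le_iff₀ hPr]
      nlinarith
  rw [this]; norm_num

theorem multi_ap_least_common (k : ℕ) (hk : 2 ≤ k) (p : Fin k → ℕ)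
    (hprime : ∀ i, (p i).Prime) (hodd : ∀ i, Odd (p i)) (hmono : StrictMono p) :
    ∃ t : ℕ, IsLeast (⋂ i : Fin k,
        {x : ℕ | ∃ r ≥ 1, x = (p i) ^ 2 + 2 * (r - 1) * (p i)}) t ∧
      (t : ℝ) = (∏ i, (p i : ℝ)) * (1 + 2 *
        (⌈(((p (Fin.last (k - 1) |>.cast (by omega)) : ℝ) ^ 2 / ∏ i, (p i : ℝ)) - 1) / 2⌉ : ℝ) *
        heaviside ((((p (Fin.last (k - 1) |>.cast (by omega)) : ℝ) ^ 2 / ∏ i, (p i : ℝ)) - 1) / 2)) := by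
  classical
  set ι : Fin k := (Fin.last (k-1)).cast (by omega) with hι
  set P : ℕ := ∏ i, p i with hPdef
  set c : ℕ := p ι ^ 2 with hcdef
  set j : ℕ := (c + P - 1) / (2*P) with hjdef
  have hppos : ∀ i, 0 < p i := fun i => (hprime i).pos
  have hPpos : 0 < P := Finset.prod_pos (fun i _ => hppos i)
  have hPodd : Odd P := Finset.prod_induction p Odd (fun _ _ => Odd.mul) odd_one (fun i _ => hodd i)
  have hdvdP : ∀ i, p i ∣ P := fun i => Finset.dvd_prod_of_mem p (Finset.mem_univ i)
  have hle : ∀ i, p i ≤ p ι := by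
    intro i
    apply hmono.monotone
    rw [Fin.le_def, hι]
    have := i.isLt
    simp only [Fin.coe_cast, Fin.val_last]
    omega
  have hcle : ∀ i, p i ^ 2 ≤ c := fun i => Nat.pow_le_pow_left (hle i) 2
  have hdiv1 : c ≤ 2*P*j + P ∧ 2*P*j ≤ c + P - 1 := by
    have hd := Nat.div_add_mod (c + P - 1) (2*P)
    have hm := Nat.mod_lt (c + P - 1) (by omega : 0 < 2*P)
    rw [← hjdef] at hd
    omega
  have htc : c ≤ P * (2*j+1) := by
    have heq : P*(2*j+1) = 2*P*j + P := by ring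
    omega
  refine ⟨P*(2*j+1), ⟨?_, ?_⟩, ?_⟩
  · -- membership
    simp only [Set.mem_iInter, Set.mem_setOf_eq]
    intro i
    obtain ⟨q, hq⟩ := (hdvdP i).mul_right (2*j+1)
    have htodd : Odd (P*(2*j+1)) := hPodd.mul ⟨j, by ring⟩
    have hqodd : Odd q := by
      rw [hq] at htodd
      exact (Nat.odd_mul.mp htodd).2
    have hpq : p i ≤ q := by
      have h1 : p i * p i ≤ p i * q := by
        calc p i * p i = p i ^ 2 := (pow_two _).symm
          _ ≤ c := hcle i
          _ ≤ P * (2*j+1) := htc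
          _ = p i * q := hq
      exact Nat.le_of_mul_le_mul_left h1 (hppos i)
    have heven : Even (q - p i) := Nat.Odd.sub_odd hqodd (hodd i)
    refine ⟨(q - p i)/2 + 1, by omega, ?_⟩
    simp only [Nat.add_sub_cancel]
    have h2 : 2*((q - p i)/2) = q - p i := by
      obtain ⟨m, hm⟩ := heven; omega
    have h3 : p i * p i ≤ q * p i := Nat.mul_le_mul_right _ hpq
    rw [hq, mul_comm]
    calc q * p i = p i ^ 2 + (q - p i) * p i := by rw [pow_two, Nat.sub_mul]; omega
      _ = p i ^ 2 + 2*((q - p i)/2) * p i := by rw [h2]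
  · -- lower bound
    intro x hx
    simp only [Set.mem_iInter, Set.mem_setOf_eq] at hx
    have hdvdx : ∀ i, p i ∣ x := by
      intro i
      obtain ⟨r, _, hxr⟩ := hx i
      exact ⟨p i + 2*(r-1), by rw [hxr]; ring⟩
    have hxodd : Odd x := by
      obtain ⟨r, _, hxr⟩ := hx ι
      rw [hxr]
      exact Odd.add_even ((hodd ι).pow) ((even_two_mul (r-1)).mul_right (p ι))
    have hxc : c ≤ x := by
      obtain ⟨r, _, hxr⟩ := hx ι
      rw [hcdef]
      omega
    have hPx : P ∣ x := by rw [hPdef]; exact aux_prod_dvd k p hprime hmono.injective x hdvdx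
    obtain ⟨m, hm⟩ := hPx
    have hmodd : Odd m := by
      rw [hm] at hxodd
      exact (Nat.odd_mul.mp hxodd).2
    obtain ⟨s, hs⟩ := hmodd
    rw [hs] at hm
    have hcs : c ≤ 2*P*s + P := by
      have heq : P*(2*s+1) = 2*P*s + P := by ring
      have := hxc
      rw [hm] at this
      omega
    have hjs : j ≤ s := by
      have h1 : c + P - 1 ≤ 2*P*s + (2*P - 1) := by omega
      have h2 : (2*P*s + (2*P - 1)) / (2*P) = s := by
        rw [add_comm, Nat.add_mul_div_left _ _ (by omega : 0 < 2*P),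
          Nat.div_eq_of_lt (by omega)]
        omega
      calc j = (c+P-1)/(2*P) := hjdef
        _ ≤ (2*P*s + (2*P-1))/(2*P) := Nat.div_le_div_right h1
        _ = s := h2
    have hfin : P*(2*j+1) ≤ P*(2*s+1) := Nat.mul_le_mul_left _ (by omega)
    omega
  · -- value
    have hPr : ((P:ℝ)) = ∏ i, (p i : ℝ) := by rw [hPdef]; push_cast; rfl
    rw [← hPr]
    have hcR : ((p ι : ℝ))^2 = (c:ℝ) := by rw [hcdef]; push_cast; ring
    rw [hcR]
    have hPrpos : (0:ℝ) < P := by exact_mod_cast hPpos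
    rcases le_or_gt c P with hcase | hcase
    · -- j = 0, degenerate heaviside term
      have hj0 : j = 0 := by rw [hjdef]; exact Nat.div_eq_of_lt (by omega)
      have hQle : ((c:ℝ)/P - 1)/2 ≤ 0 := by
        have : (c:ℝ)/P ≤ 1 := by
          rw [div_le_one hPrpos]; exact_mod_cast hcase
        linarith
      have hzero : 2 * (⌈((c:ℝ)/P - 1)/2⌉ : ℝ) * heaviside (((c:ℝ)/P - 1)/2) = 0 := by
        rcases eq_or_lt_of_le hQle with hQ0 | hQ0
        · rw [hQ0, Int.ceil_zero]; push_cast; ring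
        · have : heaviside (((c:ℝ)/P - 1)/2) = 0 := by
            unfold heaviside
            rw [if_neg (by linarith), if_neg (by linarith)]
          rw [this]; ring
      rw [hzero, hj0]
      push_cast
      ring
    · -- main case Q > 0
      have hQpos : 0 < ((c:ℝ)/P - 1)/2 := by
        have : (1:ℝ) < (c:ℝ)/P := by
          rw [lt_div_iff₀ hPrpos, one_mul]; exact_mod_cast (by omega : P < c)
        linarith
      have hH : heaviside (((c:ℝ)/P - 1)/2) = 1 := by
        unfold heaviside; rw [if_pos hQpos]
      have h1R : (c:ℝ) ≤ 2*P*j + P := by exact_mod_cast hdiv1.1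
      have h2R : 2*(P:ℝ)*j < c + P := by
        have : 2*P*j < c + P := by omega
        exact_mod_cast this
      rw [hH, aux_ceil c P j hPpos h1R h2R]
      push_cast
      ring
end
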